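/- Let P₄(S²) = ker π₄ and let Z be the center of P₄(S²). The group homomorphism from FreeGroup (Fin 2) to the quotient group P₄(S²) ⧸ Z determined by sending the two free generators to the classes of δ₁² and δ₂² is an isomorphism; in particular, P₄(S²)/Z(P₄(S²)) is a free group of rank 2. -/

import Mathlib

/-!
The full twist `Δ² = (δ₁δ₂δ₁)²` is central in `B₄(S²)`, and the sphere relation gives
`δ₃² = Δ⁻² δ₁²`. Hence `H = ⟨δ₁², δ₂², Δ²⟩` is a normal subgroup containing every `δᵢ²`, so
`B₄(S²) ⧸ H` is a quotient of the Coxeter group of type `A₃` and has at most `24` elements.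
Since it still surjects onto `S₄`, `H = P₄(S²)`; as `Δ²` is central, `P₄(S²)/Z` is generated by
the classes of `δ₁²` and `δ₂²`.

For freeness, `δ₁, δ₃ ↦ [[1, 1], [0, 1]]` and `δ₂ ↦ [[1, 0], [-1, 1]]` define a homomorphism
`B₄(S²) → PSL(2, ℤ)` sending `δ₁²` and `δ₂²` to the generators of Sanov's subgroup of `SL(2, ℤ)`,
which is free by ping-pong on `ℤ²`. If `w` maps to the centre of `P₄(S²)`, its image in `SL(2, ℤ)`
commutes up to sign with both Sanov generators, hence (comparing traces) commutes with them, hence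
is `±1`; then `w² = 1`, and `w = 1` since free groups are torsion-free.
-/

/-- The relators of the sphere braid group `B₄(S²)`: the two braid relations, the
commutation relation, and the sphere relation `δ₁δ₂δ₃δ₃δ₂δ₁ = 1`. -/
def sphereBraidRel4 : Set (FreeGroup (Fin 3)) :=
  {FreeGroup.of 0 * FreeGroup.of 1 * FreeGroup.of 0 *
      (FreeGroup.of 1 * FreeGroup.of 0 * FreeGroup.of 1)⁻¹,
   FreeGroup.of 1 * FreeGroup.of 2 * FreeGroup.of 1 *
      (FreeGroup.of 2 * FreeGroup.of 1 * FreeGroup.of 2)⁻¹,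
   FreeGroup.of 0 * FreeGroup.of 2 * (FreeGroup.of 2 * FreeGroup.of 0)⁻¹,
   FreeGroup.of 0 * FreeGroup.of 1 * FreeGroup.of 2 *
      FreeGroup.of 2 * FreeGroup.of 1 * FreeGroup.of 0}

/-- The sphere braid group `B₄(S²)` on 4 strands. -/
abbrev SphereBraidGroup4 : Type := PresentedGroup sphereBraidRel4

/-- The standard generators `δ₁, δ₂, δ₃` of `B₄(S²)` (indexed by `0, 1, 2`). -/
def δ (i : Fin 3) : SphereBraidGroup4 := PresentedGroup.of i

/-- The adjacent transpositions in `S₄`. -/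
def spherePermGen : Fin 3 → Equiv.Perm (Fin 4) := ![Equiv.swap 0 1, Equiv.swap 1 2, Equiv.swap 2 3]

lemma spherePermGen_rel : ∀ r ∈ sphereBraidRel4, FreeGroup.lift spherePermGen r = 1 := by
  intro r hr
  rcases hr with hr | hr | hr | hr <;>
    (subst hr; simp only [map_mul, map_inv, FreeGroup.lift_apply_of]; decide)

/-- The projection `π₄ : B₄(S²) → S₄` sending `δᵢ` to the transposition `(i-1, i)`. -/
def πB4S2 : SphereBraidGroup4 →* Equiv.Perm (Fin 4) := PresentedGroup.toGroup spherePermGen_rel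

lemma δ0_sq_mem_ker : (δ 0) ^ 2 ∈ πB4S2.ker := by
  rw [MonoidHom.mem_ker]
  simp only [δ, πB4S2, map_pow, PresentedGroup.toGroup.of]
  decide

lemma δ1_sq_mem_ker : (δ 1) ^ 2 ∈ πB4S2.ker := by
  rw [MonoidHom.mem_ker]
  simp only [δ, πB4S2, map_pow, PresentedGroup.toGroup.of]
  decide

/-- The class of `δ₁²` in `P₄(S²)/Z(P₄(S²))`. -/
def e₁ : πB4S2.ker ⧸ Subgroup.center πB4S2.ker :=
  QuotientGroup.mk ⟨(δ 0) ^ 2, δ0_sq_mem_ker⟩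

/-- The class of `δ₂²` in `P₄(S²)/Z(P₄(S²))`. -/
def e₂ : πB4S2.ker ⧸ Subgroup.center πB4S2.ker :=
  QuotientGroup.mk ⟨(δ 1) ^ 2, δ1_sq_mem_ker⟩

open scoped MatrixGroups Function Pointwise

theorem Finset.mul_mem_mul_of_forall_mul_mem {G : Type*} [Semigroup G] [DecidableEq G]
    {D E C : Finset G} {g : G}
    (hDE : ∀ d ∈ D, ∀ e ∈ E, d * e ∈ D) (hC : ∀ c ∈ C, c * g ∈ E * C) :
    ∀ x ∈ D * C, x * g ∈ D * C := by
  intro x hx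
  obtain ⟨d, hd, c, hc, rfl⟩ := Finset.mem_mul.mp hx
  obtain ⟨e, he, c', hc', hce⟩ := Finset.mem_mul.mp (hC c hc)
  exact Finset.mem_mul.mpr ⟨d * e, hDE d hd e he, c', hc', by rw [mul_assoc, hce, mul_assoc]⟩

section CoxeterA3

variable {G : Type*} [Group G] [DecidableEq G]

-- Products of coset representatives along `1 ≤ ⟨r 0⟩ ≤ ⟨r 0, r 1⟩ ≤ ⟨r 0, r 1, r 2⟩`: the normal
-- forms of the Coxeter groups of type `A₂` and `A₃`.
def coxeterA2Words (r : Fin 3 → G) : Finset G := {1, r 0} * {1, r 1, r 1 * r 0}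

def coxeterA3Words (r : Fin 3 → G) : Finset G :=
  coxeterA2Words r * {1, r 2, r 2 * r 1, r 2 * r 1 * r 0}

theorem coxeterA2Words_mul_mem {r : Fin 3 → G} (hsq : ∀ i, r i * r i = 1)
    (h₀₁ : r 0 * r 1 * r 0 = r 1 * r 0 * r 1) :
    ∀ d ∈ coxeterA2Words r, ∀ e ∈ ({1, r 0, r 1} : Finset G), d * e ∈ coxeterA2Words r := by
  have hA : ∀ a ∈ ({1, r 0} : Finset G), ∀ e ∈ ({1, r 0} : Finset G),
      a * e ∈ ({1, r 0} : Finset G) := by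
    intro a ha e he
    simp only [Finset.mem_insert, Finset.mem_singleton] at ha he ⊢
    rcases ha with rfl | rfl <;> rcases he with rfl | rfl <;> simp [hsq]
  have h₀ := Finset.mul_mem_mul_of_forall_mul_mem (C := {1, r 1, r 1 * r 0}) (g := r 0) hA (by
    intro c hc
    simp only [Finset.mem_insert, Finset.mem_singleton] at hc
    rcases hc with h | h | h <;> rw [h]
    · exact Finset.mem_mul.mpr ⟨r 0, by simp, 1, by simp, by simp⟩
    · exact Finset.mem_mul.mpr ⟨1, by simp, r 1 * r 0, by simp, by simp⟩
    · exact Finset.mem_mul.mpr ⟨1, by simp, r 1, by simp, by simp [mul_assoc, hsq]⟩)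
  have h₁ := Finset.mul_mem_mul_of_forall_mul_mem (C := {1, r 1, r 1 * r 0}) (g := r 1) hA (by
    intro c hc
    simp only [Finset.mem_insert, Finset.mem_singleton] at hc
    rcases hc with h | h | h <;> rw [h]
    · exact Finset.mem_mul.mpr ⟨1, by simp, r 1, by simp, by simp⟩
    · exact Finset.mem_mul.mpr ⟨1, by simp, 1, by simp, by simp [hsq]⟩
    · exact Finset.mem_mul.mpr ⟨r 0, by simp, r 1 * r 0, by simp, by rw [← mul_assoc, h₀₁]⟩)
  intro d hd e he
  simp only [Finset.mem_insert, Finset.mem_singleton] at he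
  rcases he with rfl | rfl | rfl
  exacts [by rwa [mul_one], h₀ d hd, h₁ d hd]

theorem coxeterA3Words_mul_mem {r : Fin 3 → G} (hsq : ∀ i, r i * r i = 1)
    (h₀₁ : r 0 * r 1 * r 0 = r 1 * r 0 * r 1) (h₁₂ : r 1 * r 2 * r 1 = r 2 * r 1 * r 2)
    (h₀₂ : r 0 * r 2 = r 2 * r 0) (i : Fin 3) :
    ∀ w ∈ coxeterA3Words r, w * r i ∈ coxeterA3Words r := by
  refine Finset.mul_mem_mul_of_forall_mul_mem (coxeterA2Words_mul_mem hsq h₀₁) fun c hc => ?_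
  simp only [Finset.mem_insert, Finset.mem_singleton] at hc
  fin_cases i <;> rcases hc with h | h | h | h <;> rw [h] <;>
    simp only [Fin.zero_eta, Fin.mk_one, Fin.reduceFinMk]
  · exact Finset.mem_mul.mpr ⟨r 0, by simp, 1, by simp, by simp⟩
  · exact Finset.mem_mul.mpr ⟨r 0, by simp, r 2, by simp, h₀₂⟩
  · exact Finset.mem_mul.mpr ⟨1, by simp, r 2 * r 1 * r 0, by simp, by simp⟩
  · exact Finset.mem_mul.mpr ⟨1, by simp, r 2 * r 1, by simp, by simp [mul_assoc, hsq]⟩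
  · exact Finset.mem_mul.mpr ⟨r 1, by simp, 1, by simp, by simp⟩
  · exact Finset.mem_mul.mpr ⟨1, by simp, r 2 * r 1, by simp, by simp⟩
  · exact Finset.mem_mul.mpr ⟨1, by simp, r 2, by simp, by simp [mul_assoc, hsq]⟩
  · exact Finset.mem_mul.mpr ⟨r 0, by simp, r 2 * r 1 * r 0, by simp, calc
      r 0 * (r 2 * r 1 * r 0) = r 2 * (r 0 * r 1 * r 0) := by
        rw [← mul_assoc, ← mul_assoc, h₀₂]; simp only [mul_assoc]
      _ = r 2 * r 1 * r 0 * r 1 := by rw [h₀₁]; simp only [mul_assoc]⟩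
  · exact Finset.mem_mul.mpr ⟨1, by simp, r 2, by simp, by simp⟩
  · exact Finset.mem_mul.mpr ⟨1, by simp, 1, by simp, by simp [hsq]⟩
  · exact Finset.mem_mul.mpr ⟨r 1, by simp, r 2 * r 1, by simp, by rw [← mul_assoc, h₁₂]⟩
  · exact Finset.mem_mul.mpr ⟨r 1, by simp, r 2 * r 1 * r 0, by simp, calc
      r 1 * (r 2 * r 1 * r 0) = r 2 * r 1 * r 2 * r 0 := by rw [← h₁₂]; simp only [mul_assoc]
      _ = r 2 * r 1 * r 0 * r 2 := by rw [mul_assoc _ (r 2), ← h₀₂, ← mul_assoc]⟩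

theorem mem_coxeterA3Words {r : Fin 3 → G} (hgen : Subgroup.closure (Set.range r) = ⊤)
    (hsq : ∀ i, r i * r i = 1) (h₀₁ : r 0 * r 1 * r 0 = r 1 * r 0 * r 1)
    (h₁₂ : r 1 * r 2 * r 1 = r 2 * r 1 * r 2) (h₀₂ : r 0 * r 2 = r 2 * r 0) (g : G) :
    g ∈ coxeterA3Words r := by
  have hg : g ∈ Subgroup.closure (Set.range r) := hgen ▸ Subgroup.mem_top g
  induction hg using Subgroup.closure_induction_right with
  | one =>
    rw [coxeterA3Words, coxeterA2Words]
    exact Finset.mem_mul.mpr ⟨1, Finset.mem_mul.mpr ⟨1, by simp, 1, by simp, one_mul 1⟩, 1, by simp,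
      one_mul 1⟩
  | mul_right x _ y hy hx =>
    obtain ⟨i, rfl⟩ := hy
    exact coxeterA3Words_mul_mem hsq h₀₁ h₁₂ h₀₂ i x hx
  | mul_inv_cancel x _ y hy hx =>
    obtain ⟨i, rfl⟩ := hy
    rw [inv_eq_of_mul_eq_one_right (hsq i)]
    exact coxeterA3Words_mul_mem hsq h₀₁ h₁₂ h₀₂ i x hx

end CoxeterA3

theorem finite_and_natCard_le_of_coxeterA3 {G : Type*} [Group G] {r : Fin 3 → G}
    (hgen : Subgroup.closure (Set.range r) = ⊤) (hsq : ∀ i, r i * r i = 1)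
    (h₀₁ : r 0 * r 1 * r 0 = r 1 * r 0 * r 1) (h₁₂ : r 1 * r 2 * r 1 = r 2 * r 1 * r 2)
    (h₀₂ : r 0 * r 2 = r 2 * r 0) :
    Finite G ∧ Nat.card G ≤ 24 := by
  classical
  have hmem := mem_coxeterA3Words hgen hsq h₀₁ h₁₂ h₀₂
  have hfin : Finite G :=
    Set.finite_univ_iff.mp ((coxeterA3Words r).finite_toSet.subset fun g _ => hmem g)
  have : Fintype G := Fintype.ofFinite G
  refine ⟨hfin, ?_⟩
  calc Nat.card G = Finset.univ.card := by rw [Nat.card_eq_fintype_card, Finset.card_univ]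
    _ ≤ (coxeterA3Words r).card := Finset.card_le_card fun g _ => hmem g
    _ ≤ 2 * 3 * 4 :=
      Finset.card_mul_le.trans (Nat.mul_le_mul (Finset.card_mul_le.trans
        (Nat.mul_le_mul Finset.card_le_two Finset.card_le_three)) Finset.card_le_four)

theorem mul_mul_sq_of_braid {M : Type*} [Monoid M] {a b : M}
    (h : a * b * a = b * a * b) : (a * b * a) ^ 2 = a ^ 2 * (b * a ^ 2 * b) :=
  calc (a * b * a) ^ 2 = (a * b * a) * (b * a * b) := by rw [pow_two]; nth_rw 2 [h]
    _ = a * (b * a * b) * a * b := by simp only [mul_assoc]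
    _ = a ^ 2 * (b * a ^ 2 * b) := by rw [← h]; simp only [pow_two, mul_assoc]

theorem Subgroup.mem_normalizer_closure_of_sq_mem {G : Type*} [Group G] {s : Set G} {g : G}
    (hsq : g ^ 2 ∈ closure s) (hconj : ∀ t ∈ s, g * t * g⁻¹ ∈ closure s) :
    g ∈ normalizer (closure s : Set G) := by
  have hle : ∀ t ∈ closure s, g * t * g⁻¹ ∈ closure s := by
    intro t ht
    induction ht using closure_induction with
    | mem t ht => exact hconj t ht
    | one => simp
    | mul u v _ _ hu hv => simpa only [mul_assoc, inv_mul_cancel_left] using mul_mem hu hv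
    | inv u _ hu => simpa only [mul_inv_rev, inv_inv, mul_assoc] using inv_mem hu
  refine mem_normalizer_iff.mpr fun t => ⟨hle t, fun ht => ?_⟩
  have ht' : t = (g ^ 2)⁻¹ * (g * (g * t * g⁻¹) * g⁻¹) * g ^ 2 := by group
  rw [ht']
  exact mul_mem (mul_mem (inv_mem hsq) (hle _ ht)) hsq

theorem FreeGroup.injective_lift_of_zpow_ping_pong {ι G α : Type*} [Nontrivial ι] [Group G]
    [MulAction G α] (g : ι → G) (X : ι → Set α) (hX : ∀ i, (X i).Nonempty)
    (hdisj : Pairwise (Disjoint on X))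
    (hpp : Pairwise fun i j => ∀ n : ℤ, n ≠ 0 → g i ^ n • X j ⊆ X i) :
    Function.Injective (FreeGroup.lift g) := by
  have heq : FreeGroup.lift g =
      (Monoid.CoprodI.lift fun i => FreeGroup.lift fun _ : Unit => g i).comp
        freeGroupEquivCoprodI.toMonoidHom := by
    ext i; simp
  rw [heq, MonoidHom.coe_comp]
  refine Function.Injective.comp ?_ freeGroupEquivCoprodI.injective
  refine Monoid.CoprodI.lift_injective_of_ping_pong _ ?_ X hX hdisj fun i j hij h hh => ?_
  · obtain ⟨i⟩ := (inferInstance : Nonempty ι)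
    refine Or.inr ⟨i, ?_⟩
    rw [FreeGroup.freeGroupUnitEquivInt.cardinal_eq, Cardinal.mk_denumerable]
    exact (Cardinal.natCast_lt_aleph0 (n := 3)).le
  · obtain ⟨n, rfl⟩ := FreeGroup.freeGroupUnitEquivInt.symm.surjective h
    change FreeGroup.lift (fun _ => g i) (FreeGroup.of () ^ n) • X j ⊆ X i
    rw [map_zpow, FreeGroup.lift_apply_of]
    refine hpp hij n fun hn => hh ?_
    rw [hn]; rfl

theorem abs_lt_abs_add_mul {R : Type*} [CommRing R] [LinearOrder R] [IsStrictOrderedRing R]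
    {x y k : R} (hk : 2 ≤ |k|) (h : |x| < |y|) : |y| < |x + k * y| := by
  have h' : |k * y| ≤ |x + k * y| + |x| := by simpa using abs_sub (x + k * y) x
  rw [abs_mul] at h'
  linarith [mul_le_mul_of_nonneg_right hk (abs_nonneg y)]

namespace ModularGroup

open Matrix Matrix.SpecialLinearGroup

def lowerT : SL(2, ℤ) := ⟨!![1, 0; -1, 1], by simp [Matrix.det_fin_two_of]⟩

theorem lowerT_eq : lowerT = S * T * S⁻¹ := by decide

theorem coe_lowerT_zpow (n : ℤ) : (lowerT ^ n).1 = !![1, 0; -n, 1] := by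
  rw [lowerT_eq, conj_zpow, coe_mul, coe_mul, coe_T_zpow, S_inv, coe_neg, coe_S]
  ext i j; fin_cases i <;> fin_cases j <;> simp [Matrix.mul_apply, Fin.sum_univ_succ]

theorem coe_T_sq : (T ^ 2).1 = !![1, 2; 0, 1] := by simpa using coe_T_zpow 2

theorem coe_lowerT_sq : (lowerT ^ 2).1 = !![1, 0; -2, 1] := by simpa using coe_lowerT_zpow 2

theorem mem_center_iff_eq_one_or_eq_neg_one {g : SL(2, ℤ)} :
    g ∈ Subgroup.center SL(2, ℤ) ↔ g = 1 ∨ g = -1 := by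
  constructor
  · intro h
    obtain ⟨r, hr, hg⟩ := Matrix.SpecialLinearGroup.mem_center_iff.mp h
    rcases sq_eq_one_iff.mp hr with rfl | rfl
    · exact Or.inl (Subtype.ext (by simp [← hg]))
    · exact Or.inr (Subtype.ext (by simp [← hg]))
  · rintro (rfl | rfl)
    · exact one_mem _
    · exact Subgroup.mem_center_iff.mpr fun g => by simp

theorem commute_of_commute_mk {u v : SL(2, ℤ)} (hv : (v : Matrix (Fin 2) (Fin 2) ℤ).trace ≠ 0)
    (h : Commute (QuotientGroup.mk u : PSL(2, ℤ)) (QuotientGroup.mk v)) : Commute u v := by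
  have hc : (u * v * u⁻¹)⁻¹ * v ∈ Subgroup.center SL(2, ℤ) := by
    rw [← QuotientGroup.eq]
    simp only [QuotientGroup.mk_mul, QuotientGroup.mk_inv, h.eq]
    group
  rcases mem_center_iff_eq_one_or_eq_neg_one.mp hc with hc | hc
  · exact mul_inv_eq_iff_eq_mul.mp (inv_mul_eq_one.mp hc)
  · rw [inv_mul_eq_iff_eq_mul, mul_neg_one] at hc
    have htr := congrArg (fun g : SL(2, ℤ) => (g : Matrix (Fin 2) (Fin 2) ℤ).trace) hc
    simp only [coe_neg, coe_mul, trace_neg] at htr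
    rw [Matrix.trace_mul_cycle, ← coe_mul, inv_mul_cancel, Matrix.SpecialLinearGroup.coe_one,
      one_mul] at htr
    omega

theorem eq_one_or_eq_neg_one_of_commute {g : SL(2, ℤ)} (h₁ : Commute g (T ^ 2))
    (h₂ : Commute g (lowerT ^ 2)) : g = 1 ∨ g = -1 := by
  have e₁ : g.1 * !![1, 2; 0, 1] = !![1, 2; 0, 1] * g.1 := by
    simpa only [coe_mul, coe_T_sq] using congrArg Subtype.val h₁.eq
  have e₂ : g.1 * !![1, 0; -2, 1] = !![1, 0; -2, 1] * g.1 := by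
    simpa only [coe_mul, coe_lowerT_sq] using congrArg Subtype.val h₂.eq
  rw [Matrix.eta_fin_two g.1, Matrix.mul_fin_two, Matrix.mul_fin_two] at e₁ e₂
  simp only [EmbeddingLike.apply_eq_iff_eq, Matrix.vecCons_inj, and_true] at e₁ e₂
  have h₁₀ : g 1 0 = 0 := by omega
  have h₀₁ : g 0 1 = 0 := by omega
  have h₁₁ : g 1 1 = g 0 0 := by omega
  refine mem_center_iff_eq_one_or_eq_neg_one.mp
    (Matrix.SpecialLinearGroup.mem_center_iff.mpr ⟨g 0 0, ?_, ?_⟩)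
  · have hdet := g.2
    rw [Matrix.det_fin_two, h₁₀, h₀₁, h₁₁] at hdet
    simpa [pow_two] using hdet
  · ext i j
    fin_cases i <;> fin_cases j <;> simp only [Matrix.scalar_apply, Matrix.diagonal_apply] <;>
      simp [h₁₀, h₀₁, h₁₁]

theorem T_sq_zpow_smul_subset {n : ℤ} (hn : n ≠ 0) :
    (T ^ 2) ^ n • {v : Fin 2 → ℤ | |v 0| < |v 1|} ⊆ {v | |v 1| < |v 0|} := by
  have hk : 2 ≤ |2 * n| := by rw [abs_mul, abs_two]; linarith [Int.one_le_abs hn]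
  rintro _ ⟨v, hv, rfl⟩
  rw [← zpow_natCast, ← _root_.zpow_mul]
  simpa [Matrix.SpecialLinearGroup.smul_def, coe_T_zpow, Matrix.vecHead, Matrix.vecTail]
    using abs_lt_abs_add_mul hk hv

theorem lowerT_sq_zpow_smul_subset {n : ℤ} (hn : n ≠ 0) :
    (lowerT ^ 2) ^ n • {v : Fin 2 → ℤ | |v 1| < |v 0|} ⊆ {v | |v 0| < |v 1|} := by
  have hk : 2 ≤ |-(2 * n)| := by rw [abs_neg, abs_mul, abs_two]; linarith [Int.one_le_abs hn]
  rintro _ ⟨v, hv, rfl⟩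
  rw [← zpow_natCast, ← _root_.zpow_mul]
  have h : -(2 * n * v 0) + v 1 = v 1 + -(2 * n) * v 0 := by ring
  simpa [Matrix.SpecialLinearGroup.smul_def, coe_lowerT_zpow, Matrix.vecHead, Matrix.vecTail, h]
    using abs_lt_abs_add_mul hk hv

def sanov : FreeGroup (Fin 2) →* SL(2, ℤ) := FreeGroup.lift ![T ^ 2, lowerT ^ 2]

theorem sanov_injective : Function.Injective sanov := by
  refine FreeGroup.injective_lift_of_zpow_ping_pong _
    (![{v | |v 1| < |v 0|}, {v | |v 0| < |v 1|}] : Fin 2 → Set (Fin 2 → ℤ))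
    (fun i => ?_) (fun i j hij => ?_) (fun i j hij n hn => ?_)
  · fin_cases i
    · exact ⟨![1, 0], by simp⟩
    · exact ⟨![0, 1], by simp⟩
  · fin_cases i <;> fin_cases j
    all_goals first | exact absurd rfl hij | skip
    · exact Set.disjoint_left.mpr fun (v : Fin 2 → ℤ) (h₁ : |v 1| < |v 0|) h₂ => lt_asymm h₁ h₂
    · exact Set.disjoint_left.mpr fun (v : Fin 2 → ℤ) (h₁ : |v 0| < |v 1|) h₂ => lt_asymm h₁ h₂
  · fin_cases i <;> fin_cases j
    all_goals first | exact absurd rfl hij | skip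
    exacts [T_sq_zpow_smul_subset hn, lowerT_sq_zpow_smul_subset hn]

theorem trace_sanov_of (i : Fin 2) : (sanov (FreeGroup.of i)).1.trace = 2 := by
  fin_cases i <;>
    simp only [sanov, FreeGroup.lift_apply_of, Fin.zero_eta, Fin.mk_one, Matrix.cons_val_zero,
      Matrix.cons_val_one, coe_T_sq, coe_lowerT_sq, Matrix.trace_fin_two] <;> rfl

theorem sanov_eq_one_of_commute {w : FreeGroup (Fin 2)}
    (h : ∀ i, Commute (sanov w) (sanov (FreeGroup.of i))) : w = 1 := by
  have h₀ : sanov (FreeGroup.of 0) = T ^ 2 := FreeGroup.lift_apply_of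
  have h₁ : sanov (FreeGroup.of 1) = lowerT ^ 2 := FreeGroup.lift_apply_of
  have hsq : sanov (w ^ 2) = sanov 1 := by
    rcases eq_one_or_eq_neg_one_of_commute (h₀ ▸ h 0) (h₁ ▸ h 1) with h | h <;> simp [h]
  exact (pow_eq_one_iff_left two_ne_zero).mp (sanov_injective hsq)

end ModularGroup

namespace SphereBraidGroup4

theorem mk_of (i : Fin 3) : PresentedGroup.mk sphereBraidRel4 (FreeGroup.of i) = δ i := rfl

theorem closure_range_δ : Subgroup.closure (Set.range δ) = ⊤ := PresentedGroup.closure_range_of _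

theorem δ_braid₀₁ : δ 0 * δ 1 * δ 0 = δ 1 * δ 0 * δ 1 := by
  simpa only [map_mul, map_inv, mk_of, mul_inv_eq_one] using
    PresentedGroup.one_of_mem (rels := sphereBraidRel4) (Or.inl rfl)

theorem δ_braid₁₂ : δ 1 * δ 2 * δ 1 = δ 2 * δ 1 * δ 2 := by
  simpa only [map_mul, map_inv, mk_of, mul_inv_eq_one] using
    PresentedGroup.one_of_mem (rels := sphereBraidRel4) (Or.inr (Or.inl rfl))

theorem δ_commute₀₂ : Commute (δ 0) (δ 2) := by
  show δ 0 * δ 2 = δ 2 * δ 0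
  simpa only [map_mul, map_inv, mk_of, mul_inv_eq_one] using
    PresentedGroup.one_of_mem (rels := sphereBraidRel4) (Or.inr (Or.inr (Or.inl rfl)))

theorem δ_sphere : δ 0 * δ 1 * δ 2 * δ 2 * δ 1 * δ 0 = 1 := by
  simpa only [map_mul, mk_of] using
    PresentedGroup.one_of_mem (rels := sphereBraidRel4) (Or.inr (Or.inr (Or.inr rfl)))

def fullTwist : SphereBraidGroup4 := (δ 0 * δ 1 * δ 0) ^ 2

theorem fullTwist_eq₀ : fullTwist = δ 0 ^ 2 * (δ 1 * δ 0 ^ 2 * δ 1) :=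
  mul_mul_sq_of_braid δ_braid₀₁

theorem fullTwist_eq₁ : fullTwist = δ 1 ^ 2 * (δ 0 * δ 1 ^ 2 * δ 0) := by
  rw [fullTwist, δ_braid₀₁]; exact mul_mul_sq_of_braid δ_braid₀₁.symm

theorem δ_two_sq : δ 2 ^ 2 = (δ 1 * δ 0 ^ 2 * δ 1)⁻¹ := by
  have h : δ 2 ^ 2 * (δ 1 * δ 0 ^ 2 * δ 1) =
      (δ 0 * δ 1)⁻¹ * (δ 0 * δ 1 * δ 2 * δ 2 * δ 1 * δ 0) * (δ 0 * δ 1) := by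
    simp only [pow_two]; group
  rw [eq_inv_iff_mul_eq_one, h, δ_sphere]; group

theorem fullTwist_mem_center : fullTwist ∈ Subgroup.center SphereBraidGroup4 := by
  have h₀ : SemiconjBy (δ 0 * δ 1 * δ 0) (δ 0) (δ 1) := by
    rw [SemiconjBy]; nth_rw 1 [δ_braid₀₁]; simp only [mul_assoc]
  have h₁ : SemiconjBy (δ 0 * δ 1 * δ 0) (δ 1) (δ 0) := by
    rw [SemiconjBy]; nth_rw 2 [δ_braid₀₁]; simp only [mul_assoc]
  have h₂ : Commute fullTwist (δ 2) := by
    rw [fullTwist_eq₀, ← inv_inv (δ 1 * _ * _), ← δ_two_sq]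
    exact (δ_commute₀₂.pow_left 2).mul_left ((Commute.refl _).pow_left 2).inv_left
  have hgen : Set.range δ ⊆ Subgroup.centralizer {fullTwist} := by
    rintro _ ⟨i, rfl⟩
    refine Subgroup.mem_centralizer_iff.mpr fun _ h => (Set.mem_singleton_iff.mp h) ▸ ?_
    fin_cases i
    · rw [fullTwist, pow_two]; exact h₁.mul_left h₀
    · rw [fullTwist, pow_two]; exact h₀.mul_left h₁
    · exact h₂
  have htop : Subgroup.centralizer {fullTwist} = ⊤ :=
    top_le_iff.mp (closure_range_δ ▸ (Subgroup.closure_le _).mpr hgen)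
  exact Subgroup.centralizer_eq_top_iff_subset.mp htop rfl

def twistSubgroup : Subgroup SphereBraidGroup4 := Subgroup.closure {δ 0 ^ 2, δ 1 ^ 2, fullTwist}

theorem fullTwist_mem : fullTwist ∈ twistSubgroup := Subgroup.subset_closure (by simp)

theorem δ_sq_mem : ∀ i, δ i ^ 2 ∈ twistSubgroup
  | 0 => Subgroup.subset_closure (by simp)
  | 1 => Subgroup.subset_closure (by simp)
  | 2 => by
    have h : δ 2 ^ 2 = fullTwist⁻¹ * δ 0 ^ 2 := by rw [δ_two_sq, fullTwist_eq₀]; group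
    rw [h]
    exact mul_mem (inv_mem fullTwist_mem) (Subgroup.subset_closure (by simp))

theorem δ_conj_fullTwist (i : Fin 3) : δ i * fullTwist * (δ i)⁻¹ = fullTwist := by
  rw [Subgroup.mem_center_iff.mp fullTwist_mem_center, mul_inv_cancel_right]

theorem δ_zero_conj_mem {t : SphereBraidGroup4}
    (ht : t ∈ ({δ 0 ^ 2, δ 1 ^ 2, fullTwist} : Set SphereBraidGroup4)) :
    δ 0 * t * (δ 0)⁻¹ ∈ twistSubgroup := by
  rcases ht with rfl | rfl | rfl
  · rw [show δ 0 * δ 0 ^ 2 * (δ 0)⁻¹ = δ 0 ^ 2 by group]; exact δ_sq_mem 0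
  · have h : δ 0 * δ 1 ^ 2 * (δ 0)⁻¹ = (δ 1 ^ 2)⁻¹ * fullTwist * (δ 0 ^ 2)⁻¹ := by
      rw [fullTwist_eq₁]; group
    rw [h]
    exact mul_mem (mul_mem (inv_mem (δ_sq_mem 1)) fullTwist_mem) (inv_mem (δ_sq_mem 0))
  · rw [δ_conj_fullTwist]; exact fullTwist_mem

theorem δ_one_conj_mem {t : SphereBraidGroup4}
    (ht : t ∈ ({δ 0 ^ 2, δ 1 ^ 2, fullTwist} : Set SphereBraidGroup4)) :
    δ 1 * t * (δ 1)⁻¹ ∈ twistSubgroup := by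
  rcases ht with rfl | rfl | rfl
  · have h : δ 1 * δ 0 ^ 2 * (δ 1)⁻¹ = (δ 0 ^ 2)⁻¹ * fullTwist * (δ 1 ^ 2)⁻¹ := by
      rw [fullTwist_eq₀]; group
    rw [h]
    exact mul_mem (mul_mem (inv_mem (δ_sq_mem 0)) fullTwist_mem) (inv_mem (δ_sq_mem 1))
  · rw [show δ 1 * δ 1 ^ 2 * (δ 1)⁻¹ = δ 1 ^ 2 by group]; exact δ_sq_mem 1
  · rw [δ_conj_fullTwist]; exact fullTwist_mem

theorem δ_two_conj_mem {t : SphereBraidGroup4}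
    (ht : t ∈ ({δ 0 ^ 2, δ 1 ^ 2, fullTwist} : Set SphereBraidGroup4)) :
    δ 2 * t * (δ 2)⁻¹ ∈ twistSubgroup := by
  rcases ht with rfl | rfl | rfl
  · rw [((δ_commute₀₂.pow_left 2).symm.eq : δ 2 * δ 0 ^ 2 = _), mul_inv_cancel_right]
    exact δ_sq_mem 0
  · have hc : δ 2 * δ 1 * (δ 2)⁻¹ = (δ 1)⁻¹ * δ 2 * δ 1 :=
      calc _ = (δ 1)⁻¹ * (δ 1 * δ 2 * δ 1) * (δ 2)⁻¹ := by group
        _ = _ := by rw [δ_braid₁₂]; group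
    have h : δ 2 * δ 1 ^ 2 * (δ 2)⁻¹ = (δ 1 ^ 2)⁻¹ * (δ 0 ^ 2)⁻¹ :=
      calc _ = (δ 2 * δ 1 * (δ 2)⁻¹) ^ 2 := conj_pow.symm
        _ = (δ 1)⁻¹ * δ 2 ^ 2 * δ 1 := by rw [hc]; simp only [pow_two]; group
        _ = _ := by rw [δ_two_sq]; group
    rw [h]
    exact mul_mem (inv_mem (δ_sq_mem 1)) (inv_mem (δ_sq_mem 0))
  · rw [δ_conj_fullTwist]; exact fullTwist_mem

instance twistSubgroup_normal : twistSubgroup.Normal := by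
  refine Subgroup.normalizer_eq_top_iff.mp (top_le_iff.mp ?_)
  rw [← closure_range_δ, Subgroup.closure_le]
  rintro _ ⟨i, rfl⟩
  refine Subgroup.mem_normalizer_closure_of_sq_mem (δ_sq_mem i) fun t ht => ?_
  match i with
  | 0 => exact δ_zero_conj_mem ht
  | 1 => exact δ_one_conj_mem ht
  | 2 => exact δ_two_conj_mem ht

theorem finite_and_natCard_quotient_twistSubgroup_le :
    Finite (SphereBraidGroup4 ⧸ twistSubgroup) ∧
      Nat.card (SphereBraidGroup4 ⧸ twistSubgroup) ≤ 24 := by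
  let q := QuotientGroup.mk' twistSubgroup
  refine finite_and_natCard_le_of_coxeterA3 (r := q ∘ δ) ?_ (fun i => ?_)
    (by simp only [Function.comp_apply, ← map_mul, δ_braid₀₁])
    (by simp only [Function.comp_apply, ← map_mul, δ_braid₁₂])
    (by simp only [Function.comp_apply, ← map_mul, δ_commute₀₂.eq])
  · rw [Set.range_comp, ← MonoidHom.map_closure, closure_range_δ,
      Subgroup.map_top_of_surjective _ (QuotientGroup.mk'_surjective _)]
  · rw [Function.comp_apply, ← map_mul, ← pow_two, QuotientGroup.mk'_apply,
      QuotientGroup.eq_one_iff]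
    exact δ_sq_mem i

theorem πB4S2_δ (i : Fin 3) : πB4S2 (δ i) = spherePermGen i := PresentedGroup.toGroup.of _

theorem πB4S2_surjective : Function.Surjective πB4S2 := by
  have h : πB4S2 ∘ δ = fun i : Fin 3 => Equiv.swap i.castSucc i.succ := by
    funext i; fin_cases i <;> rfl
  rw [← MonoidHom.range_eq_top, MonoidHom.range_eq_map, ← closure_range_δ, MonoidHom.map_closure,
    ← Set.range_comp, h]
  exact Subgroup.closure_eq_top_of_mclosure_eq_top (Equiv.Perm.mclosure_swap_castSucc_succ 3)

theorem twistSubgroup_le_ker : twistSubgroup ≤ πB4S2.ker := by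
  rw [twistSubgroup, Subgroup.closure_le]
  rintro _ (rfl | rfl | rfl)
  · exact δ0_sq_mem_ker
  · exact δ1_sq_mem_ker
  · rw [SetLike.mem_coe, MonoidHom.mem_ker, fullTwist]
    simp only [map_pow, map_mul, πB4S2_δ]
    decide

theorem ker_le_twistSubgroup : πB4S2.ker ≤ twistSubgroup := by
  let π' := QuotientGroup.lift twistSubgroup πB4S2 twistSubgroup_le_ker
  obtain ⟨hfin, hcard⟩ := finite_and_natCard_quotient_twistSubgroup_le
  have hbij : Function.Bijective π' :=
    (QuotientGroup.lift_surjective_of_surjective (φ := πB4S2) (hφ := πB4S2_surjective)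
      (HN := twistSubgroup_le_ker)).bijective_of_nat_card_le
      (hcard.trans (by rw [Nat.card_perm, Nat.card_eq_fintype_card, Fintype.card_fin]; rfl))
  intro g hg
  have h : π' g = π' 1 := by simpa [π'] using hg
  exact (QuotientGroup.eq_one_iff g).mp (hbij.1 h)

open ModularGroup

def braidMatrix : Fin 3 → SL(2, ℤ) := ![T, lowerT, T]

-- `(T * lowerT * T) ^ 2 = -1`, so the sphere relation only holds modulo the centre.
theorem lift_braidMatrix_mem_center :
    ∀ r ∈ sphereBraidRel4, FreeGroup.lift braidMatrix r ∈ Subgroup.center SL(2, ℤ) := by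
  intro r hr
  rw [mem_center_iff_eq_one_or_eq_neg_one]
  rcases hr with rfl | rfl | rfl | rfl <;>
    simp only [map_mul, map_inv, FreeGroup.lift_apply_of, braidMatrix] <;> decide

def braidRep : SphereBraidGroup4 →* PSL(2, ℤ) :=
  PresentedGroup.toGroup (f := fun i => (braidMatrix i : PSL(2, ℤ))) fun r hr => by
    have h : FreeGroup.lift (fun i => (braidMatrix i : PSL(2, ℤ))) =
        (QuotientGroup.mk' _).comp (FreeGroup.lift braidMatrix) :=
      FreeGroup.ext_hom _ _ fun i => by simp
    rw [h, MonoidHom.comp_apply, QuotientGroup.mk'_apply, QuotientGroup.eq_one_iff]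
    exact lift_braidMatrix_mem_center r hr

theorem braidRep_δ (i : Fin 3) : braidRep (δ i) = braidMatrix i := PresentedGroup.toGroup.of _

def pureGen : Fin 2 → πB4S2.ker := ![⟨δ 0 ^ 2, δ0_sq_mem_ker⟩, ⟨δ 1 ^ 2, δ1_sq_mem_ker⟩]

theorem lift_e₁_e₂_eq : FreeGroup.lift ![e₁, e₂] =
    (QuotientGroup.mk' (Subgroup.center πB4S2.ker)).comp (FreeGroup.lift pureGen) :=
  FreeGroup.ext_hom _ _ fun i => by fin_cases i <;> rfl

theorem braidRep_lift_pureGen (w : FreeGroup (Fin 2)) :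
    braidRep (FreeGroup.lift pureGen w) = sanov w := by
  have h : (braidRep.comp πB4S2.ker.subtype).comp (FreeGroup.lift pureGen) =
      (QuotientGroup.mk' _).comp sanov :=
    FreeGroup.ext_hom _ _ fun i => by fin_cases i <;> simp [pureGen, sanov, braidRep_δ, braidMatrix]
  exact DFunLike.congr_fun h w

theorem eq_one_of_lift_pureGen_mem_center {w : FreeGroup (Fin 2)}
    (hw : FreeGroup.lift pureGen w ∈ Subgroup.center πB4S2.ker) : w = 1 := by
  refine sanov_eq_one_of_commute fun i => ?_
  have hc : Commute (FreeGroup.lift pureGen (FreeGroup.of i)) (FreeGroup.lift pureGen w) :=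
    Subgroup.mem_center_iff.mp hw _
  have hc' := hc.map (braidRep.comp πB4S2.ker.subtype)
  simp only [MonoidHom.comp_apply, Subgroup.coe_subtype, braidRep_lift_pureGen] at hc'
  exact commute_of_commute_mk (by rw [trace_sanov_of]; decide) hc'.symm

theorem fullTwist_mem_center_ker :
    (⟨fullTwist, twistSubgroup_le_ker fullTwist_mem⟩ : πB4S2.ker) ∈ Subgroup.center πB4S2.ker :=
  Subgroup.mem_center_iff.mpr fun g =>
    Subtype.ext (Subgroup.mem_center_iff.mp fullTwist_mem_center g)

theorem mk_comp_lift_pureGen_surjective :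
    Function.Surjective ((QuotientGroup.mk' (Subgroup.center πB4S2.ker)).comp
      (FreeGroup.lift pureGen)) := by
  intro q
  obtain ⟨u, rfl⟩ := QuotientGroup.mk'_surjective _ q
  let K := ((QuotientGroup.mk' (Subgroup.center πB4S2.ker)).comp
    (FreeGroup.lift pureGen)).range.comap (QuotientGroup.mk' (Subgroup.center πB4S2.ker))
  have hT : twistSubgroup ≤ K.map πB4S2.ker.subtype := by
    rw [twistSubgroup, Subgroup.closure_le]
    rintro _ (rfl | rfl | rfl)
    · exact ⟨pureGen 0, ⟨FreeGroup.of 0, by simp⟩, rfl⟩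
    · exact ⟨pureGen 1, ⟨FreeGroup.of 1, by simp⟩, rfl⟩
    · exact ⟨_, ⟨1, ((QuotientGroup.eq_one_iff _).mpr fullTwist_mem_center_ker).symm⟩, rfl⟩
  obtain ⟨k, hk, hku⟩ := hT (ker_le_twistSubgroup u.2)
  rwa [Subtype.ext hku] at hk

end SphereBraidGroup4

open SphereBraidGroup4

/-- `P₄(S²)` modulo its center is a free group of rank 2, freely generated by the
classes of `δ₁²` and `δ₂²`. -/
theorem pureSphereBraidGroup4_mod_center_free :
    Function.Bijective
      (FreeGroup.lift ![e₁, e₂] :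
        FreeGroup (Fin 2) →* πB4S2.ker ⧸ Subgroup.center πB4S2.ker) := by
  rw [lift_e₁_e₂_eq]
  refine ⟨(injective_iff_map_eq_one _).mpr fun w hw => ?_, mk_comp_lift_pureGen_surjective⟩
  exact eq_one_of_lift_pureGen_mem_center ((QuotientGroup.eq_one_iff _).mp hw)
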